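/- arXiv:2106.05005 — 2 statements merged into one kernel-verified Lean document; each statement's English description precedes it below -/
import Mathlib

section
/- Consider the DeC operators on ℝ^I with Lipschitz-continuous f (constant L): L¹(y⁰,…,y^M)_m = y^m − y⁰ − β^m Δt f(y⁰) and L²(y⁰,…,y^M)_m = y^m − y⁰ − Δt Σ_r θ_r^m f(y^r). Then for any two state vectors 𝐲 = (y⁰,…,y^M) and 𝐳 = (z⁰,…,z^M) with y⁰ = z⁰, one has ‖(L¹ − L²)(𝐲) − (L¹ − L²)(𝐳)‖ ≤ C Δt max_m ‖y^m − z^m‖, where C = L · max_m Σ_r |θ_r^m − β_r^m| and β_r^m := β^m if r = 0 and 0 otherwise. -/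
open Finset

/-- Lipschitz continuity of L¹ − L² for the DeC operators. -/
theorem dec_L1_sub_L2_lipschitz
    (I M : ℕ) (hM : 0 < M)
    (f : (Fin I → ℝ) → (Fin I → ℝ)) (L : ℝ)
    (hf : ∀ x y : Fin I → ℝ, ‖f x - f y‖ ≤ L * ‖x - y‖)
    (β : Fin M → ℝ) (θ : Fin (M + 1) → Fin M → ℝ) (Δt : ℝ) (hΔt : 0 < Δt)
    (L1 L2 : (Fin (M + 1) → (Fin I → ℝ)) → (Fin M → (Fin I → ℝ)))
    (hL1 : ∀ y m, L1 y m = y m.succ - y 0 - (β m * Δt) • f (y 0))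
    (hL2 : ∀ y m, L2 y m = y m.succ - y 0 - Δt • ∑ r, θ r m • f (y r))
    (y z : Fin (M + 1) → (Fin I → ℝ)) (h0 : y 0 = z 0)
    (C : ℝ)
    (hC : C = L * (univ.sup' (univ_nonempty_iff.mpr ⟨⟨0, hM⟩⟩) fun m : Fin M =>
      ∑ r, |θ r m - (if r = 0 then β m else 0)|)) :
    ∀ m : Fin M,
      ‖(L1 y m - L2 y m) - (L1 z m - L2 z m)‖ ≤
        C * Δt * (univ.sup' univ_nonempty fun r : Fin (M + 1) => ‖y r - z r‖) := by
  intro m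
  set S : ℝ := univ.sup' univ_nonempty fun r : Fin (M + 1) => ‖y r - z r‖ with hS
  have hSr : ∀ r : Fin (M + 1), ‖y r - z r‖ ≤ S := fun r =>
    le_sup' (fun r : Fin (M+1) => ‖y r - z r‖) (mem_univ r)
  have hS0 : 0 ≤ S := le_trans (norm_nonneg _) (hSr 0)
  set T : ℝ := univ.sup' (univ_nonempty_iff.mpr ⟨⟨0, hM⟩⟩) fun m : Fin M =>
      ∑ r, |θ r m - (if r = 0 then β m else 0)| with hT
  have hTm : (∑ r, |θ r m - (if r = 0 then β m else 0)|) ≤ T :=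
    le_sup' (fun m : Fin M => ∑ r, |θ r m - (if r = 0 then β m else 0)|) (mem_univ m)
  have key : (L1 y m - L2 y m) - (L1 z m - L2 z m)
      = Δt • ∑ r, (θ r m - (if r = 0 then β m else 0)) • (f (y r) - f (z r)) := by
    rw [hL1, hL1, hL2, hL2, h0]
    simp only [sub_smul, smul_sub, ite_smul, zero_smul, Finset.sum_sub_distrib,
      Finset.smul_sum, Finset.sum_ite_eq', mem_univ, if_true]
    simp only [h0]
    abel
  rw [key]
  rcases eq_or_lt_of_le hS0 with hSeq | hSpos
  · have hyz : ∀ r, y r = z r := by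
      intro r
      have := hSr r
      rw [← hSeq] at this
      have := le_antisymm this (norm_nonneg _)
      exact sub_eq_zero.mp (norm_eq_zero.mp this)
    have : ∀ r : Fin (M+1), f (y r) - f (z r) = 0 := fun r => by rw [hyz r, sub_self]
    simp [this, ← hSeq]
  · have hL0 : 0 ≤ L := by
      obtain ⟨r, hr⟩ : ∃ r : Fin (M + 1), 0 < ‖y r - z r‖ := by
        by_contra h
        push_neg at h
        have : S ≤ 0 := by
          apply sup'_le
          intro r _
          exact h r
        linarith
      nlinarith [hf (y r) (z r), norm_nonneg (f (y r) - f (z r))]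
    calc ‖Δt • ∑ r, (θ r m - (if r = 0 then β m else 0)) • (f (y r) - f (z r))‖
        = Δt * ‖∑ r, (θ r m - (if r = 0 then β m else 0)) • (f (y r) - f (z r))‖ := by
          rw [norm_smul, Real.norm_eq_abs, abs_of_pos hΔt]
      _ ≤ Δt * ∑ r, |θ r m - (if r = 0 then β m else 0)| * (L * S) := by
          apply mul_le_mul_of_nonneg_left _ hΔt.le
          refine le_trans (norm_sum_le _ _) (Finset.sum_le_sum fun r _ => ?_)
          rw [norm_smul, Real.norm_eq_abs]
          apply mul_le_mul_of_nonneg_left _ (abs_nonneg _)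
          exact le_trans (hf _ _) (mul_le_mul_of_nonneg_left (hSr r) hL0)
      _ = Δt * ((∑ r, |θ r m - (if r = 0 then β m else 0)|) * (L * S)) := by
          rw [← Finset.sum_mul]
      _ ≤ Δt * (T * (L * S)) := by
          apply mul_le_mul_of_nonneg_left _ hΔt.le
          exact mul_le_mul_of_nonneg_right hTm (by positivity)
      _ = C * Δt * S := by rw [hC]; ring
end

section
/- DeC convergence with modified L²: Suppose operators L¹, L̃² : (ℝ^I)^{M+1} → (ℝ^I)^M satisfy (i) the coercivity ‖L¹(𝐲) − L¹(𝐳)‖ ≥ α‖𝐲 − 𝐳‖ for state vectors sharing the same first component, with α > 0; (ii) Lipschitz continuity ‖(L¹ − L̃²)(𝐲) − (L¹ − L̃²)(𝐳)‖ ≤ C_L Δt ‖𝐲 − 𝐳‖ for such state vectors; and (iii) L̃²(𝐲*) = 0 for some fixed point 𝐲*. Then the DeC iterates defined by L¹(𝐲^{(k)}) = L¹(𝐲^{(k−1)}) − L̃²(𝐲^{(k−1)}), all sharing first component y⁰ = y*⁰, satisfy ‖𝐲^{(k)} − 𝐲*‖ ≤ (C_L Δt/α)^k ‖𝐲^{(0)}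 − 𝐲*‖. -/
/-- Convergence of the DeC iteration with a (relaxed) high-order operator L̃²:
the error contracts geometrically with factor C_L Δt / α. -/
theorem dec_convergence
    (I M : ℕ)
    (L1 L2 : (Fin (M + 1) → (Fin I → ℝ)) → (Fin M → (Fin I → ℝ)))
    (α CL Δt : ℝ) (hα : 0 < α) (hCL : 0 ≤ CL) (hΔt : 0 ≤ Δt)
    (hcoer : ∀ y z : Fin (M + 1) → (Fin I → ℝ), y 0 = z 0 →
      α * ‖y - z‖ ≤ ‖L1 y - L1 z‖)
    (hlip : ∀ y z : Fin (M + 1) → (Fin I → ℝ), y 0 = z 0 →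
      ‖(L1 y - L2 y) - (L1 z - L2 z)‖ ≤ CL * Δt * ‖y - z‖)
    (ystar : Fin (M + 1) → (Fin I → ℝ)) (hstar : L2 ystar = 0)
    (yseq : ℕ → (Fin (M + 1) → (Fin I → ℝ)))
    (h0 : ∀ k, yseq k 0 = ystar 0)
    (hiter : ∀ k, L1 (yseq (k + 1)) = L1 (yseq k) - L2 (yseq k)) :
    ∀ k, ‖yseq k - ystar‖ ≤ (CL * Δt / α) ^ k * ‖yseq 0 - ystar‖ := by
  intro k
  induction k with
  | zero => simp
  | succ k ih =>
    have key : α * ‖yseq (k + 1) - ystar‖ ≤ CL * Δt * ‖yseq k - ystar‖ := by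
      calc α * ‖yseq (k + 1) - ystar‖ ≤ ‖L1 (yseq (k + 1)) - L1 ystar‖ := by
            exact hcoer _ _ ((h0 (k + 1)))
        _ = ‖(L1 (yseq k) - L2 (yseq k)) - (L1 ystar - L2 ystar)‖ := by
            rw [hiter k, hstar, sub_zero]
        _ ≤ CL * Δt * ‖yseq k - ystar‖ := hlip _ _ (h0 k)
    have h1 : ‖yseq (k + 1) - ystar‖ ≤ (CL * Δt / α) * ‖yseq k - ystar‖ := by
      rw [div_mul_eq_mul_div, le_div_iff₀ hα, mul_comm]
      exact key
    calc ‖yseq (k + 1) - ystar‖ ≤ (CL * Δt / α) * ‖yseq k - ystar‖ := h1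
      _ ≤ (CL * Δt / α) * ((CL * Δt / α) ^ k * ‖yseq 0 - ystar‖) := by
          apply mul_le_mul_of_nonneg_left ih
          positivity
      _ = (CL * Δt / α) ^ (k + 1) * ‖yseq 0 - ystar‖ := by ring
end
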